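/- Let P and Q be polynomials in the jet variables (f_k^{(λ)})_{1≤k≤n, λ≥1} that are invariant by reparametrization of weights m and n respectively, i.e. P(jᵏ(f∘φ)) = (φ')^m · P((jᵏf)∘φ) and similarly for Q. Define the total differentiation operator D = Σ_k Σ_λ f_k^{(λ+1)} ∂/∂f_k^{(λ)} and the bracket [P,Q] := n·(DP)·Q − m·P·(DQ). Then [P,Q] is invariant by reparametrization of weight m + n + 1. -/

import Mathlib

/-!
Since `d/dz f^{(λ)} = f^{(λ+1)}`, the chain rule for polynomials shows that `D` is differentiation
in the source variable: `(DP)(jf)(z) = d/dz (P(jf)(z))`. Differentiating the invariance identity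
`P(j(f∘φ)) = φ'^m P(jf∘φ)` therefore gives
`(DP)(j(f∘φ)) = φ'^(m+1) (DP)(jf∘φ) + m φ'^(m-1) φ'' P(jf∘φ)`,
and in `q·DP·Q − m·P·DQ` the two terms carrying `φ''` cancel.
-/

open MvPolynomial

/-- The total differentiation operator `D = Σ_k Σ_λ f_k^{(λ+1)} ∂/∂f_k^{(λ)}` acting on
jet polynomials, i.e. polynomials in the formal derivative variables `f_k^{(λ)}`,
encoded as `MvPolynomial (Fin n × ℕ) ℂ` where the variable `(k, λ)` stands for
`f_k^{(λ)}`. -/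
noncomputable def Dop {n : ℕ} (P : MvPolynomial (Fin n × ℕ) ℂ) :
    MvPolynomial (Fin n × ℕ) ℂ :=
  ∑ v ∈ P.vars, X (v.1, v.2 + 1) * pderiv v P

/-- Evaluation of a jet polynomial on the jet of an actual map `f : ℂ → ℂⁿ` at `z`:
the variable `(k, λ)` is evaluated to the derivative `f_k^{(λ)}(z)`. -/
noncomputable def jetEval {n : ℕ} (f : Fin n → ℂ → ℂ) (z : ℂ)
    (P : MvPolynomial (Fin n × ℕ) ℂ) : ℂ :=
  eval (fun v => iteratedDeriv v.2 (f v.1) z) P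

/-- A jet polynomial `P` is invariant by reparametrization of weight `m` if
`P(jᵏ(f∘φ)) = (φ')^m · P((jᵏf)∘φ)` for all holomorphic maps `f` and
reparametrizations `φ`. -/
def IsInvariantWt {n : ℕ} (m : ℕ) (P : MvPolynomial (Fin n × ℕ) ℂ) : Prop :=
  ∀ f : Fin n → ℂ → ℂ, (∀ k, Differentiable ℂ (f k)) →
    ∀ φ : ℂ → ℂ, Differentiable ℂ φ →
      ∀ z : ℂ, jetEval (fun k => f k ∘ φ) z P = (deriv φ z) ^ m * jetEval f (φ z) P

/-- The bracket `[P,Q] := n·(DP)·Q − m·P·(DQ)` of a weight-`m` jet polynomial `P` and a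
weight-`n` jet polynomial `Q`. -/
noncomputable def jetBracket {n : ℕ} (m q : ℕ) (P Q : MvPolynomial (Fin n × ℕ) ℂ) :
    MvPolynomial (Fin n × ℕ) ℂ :=
  (q : MvPolynomial (Fin n × ℕ) ℂ) * Dop P * Q
    - (m : MvPolynomial (Fin n × ℕ) ℂ) * P * Dop Q

theorem ContDiff.hasDerivAt_iteratedDeriv {𝕜 F : Type*} [NontriviallyNormedField 𝕜]
    [NormedAddCommGroup F] [NormedSpace 𝕜 F] {f : 𝕜 → F} (k : ℕ) (hf : ContDiff 𝕜 (k + 1) f)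
    (z : 𝕜) : HasDerivAt (iteratedDeriv k f) (iteratedDeriv (k + 1) f z) z := by
  rw [iteratedDeriv_succ]
  exact (hf.differentiable_iteratedDeriv' k z).hasDerivAt

namespace MvPolynomial

variable {𝕜 σ : Type*} [NontriviallyNormedField 𝕜]

/-- Summing over a fixed finite `S ⊇ P.vars` rather than over `P.vars` makes the statement
stable under the algebra operations, so that it can be proved by induction on `adjoin`. -/
theorem hasDerivAt_eval_of_mem_supported {g : 𝕜 → σ → 𝕜} {g' : σ → 𝕜} {z : 𝕜} {S : Finset σ}
    (hg : ∀ v ∈ S, HasDerivAt (fun w => g w v) (g' v) z) {P : MvPolynomial σ 𝕜}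
    (hP : P ∈ supported 𝕜 (S : Set σ)) :
    HasDerivAt (fun w => eval (g w) P) (∑ v ∈ S, g' v * eval (g z) (pderiv v P)) z := by
  classical
  rw [supported_eq_adjoin_X] at hP
  induction hP using Algebra.adjoin_induction with
  | mem x hx =>
    obtain ⟨u, hu, rfl⟩ := hx
    rw [Finset.mem_coe] at hu
    simpa [pderiv_X, Pi.single_apply, hu] using hg u hu
  | algebraMap r => simpa using hasDerivAt_const z r
  | add P Q _ _ hP hQ =>
    simp only [map_add, mul_add, Finset.sum_add_distrib]
    exact hP.add hQ
  | mul P Q _ _ hP hQ =>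
    simp only [map_mul]
    refine (hP.mul hQ).congr_deriv ?_
    simp only [Derivation.leibniz, smul_eq_mul, map_add, map_mul, mul_add,
      Finset.sum_add_distrib, Finset.sum_mul, Finset.mul_sum]
    rw [add_comm]
    congr 1 <;> exact Finset.sum_congr rfl fun _ _ => by ring

theorem hasDerivAt_eval {g : 𝕜 → σ → 𝕜} {g' : σ → 𝕜} {z : 𝕜} (P : MvPolynomial σ 𝕜)
    (hg : ∀ v ∈ P.vars, HasDerivAt (fun w => g w v) (g' v) z) :
    HasDerivAt (fun w => eval (g w) P) (∑ v ∈ P.vars, g' v * eval (g z) (pderiv v P)) z :=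
  hasDerivAt_eval_of_mem_supported hg (mem_supported.2 subset_rfl)

end MvPolynomial

theorem hasDerivAt_jetEval {n : ℕ} {f : Fin n → ℂ → ℂ} (hf : ∀ k, Differentiable ℂ (f k))
    (P : MvPolynomial (Fin n × ℕ) ℂ) (z : ℂ) :
    HasDerivAt (fun w => jetEval f w P) (jetEval f z (Dop P)) z := by
  refine (P.hasDerivAt_eval fun v _ =>
    (hf v.1).contDiff.hasDerivAt_iteratedDeriv v.2 z).congr_deriv ?_
  simp [jetEval, Dop, map_sum]

theorem IsInvariantWt.jetEval_comp_Dop {n m : ℕ} {P : MvPolynomial (Fin n × ℕ) ℂ}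
    (hP : IsInvariantWt m P) {f : Fin n → ℂ → ℂ} (hf : ∀ k, Differentiable ℂ (f k))
    {φ : ℂ → ℂ} (hφ : Differentiable ℂ φ) (z : ℂ) :
    jetEval (fun k => f k ∘ φ) z (Dop P) =
      m * deriv φ z ^ (m - 1) * deriv (deriv φ) z * jetEval f (φ z) P
        + deriv φ z ^ m * (jetEval f (φ z) (Dop P) * deriv φ z) := by
  have hlhs := hasDerivAt_jetEval (fun k => (hf k).comp hφ) P z
  have hφ' : HasDerivAt (deriv φ) (deriv (deriv φ) z) z := (hφ.deriv z).hasDerivAt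
  have hrhs := (hφ'.pow m).mul ((hasDerivAt_jetEval hf P (φ z)).comp z (hφ z).hasDerivAt)
  rw [funext (hP f hf φ hφ)] at hlhs
  exact hlhs.unique hrhs

theorem jetEval_jetBracket {n : ℕ} (m q : ℕ) (P Q : MvPolynomial (Fin n × ℕ) ℂ)
    (f : Fin n → ℂ → ℂ) (z : ℂ) :
    jetEval f z (jetBracket m q P Q) =
      q * jetEval f z (Dop P) * jetEval f z Q - m * jetEval f z P * jetEval f z (Dop Q) := by
  simp [jetBracket, jetEval]

/-- If `P` and `Q` are jet polynomials invariant by reparametrization of weights `m` and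
`n` respectively, then the bracket `[P,Q] = n·DP·Q − m·P·DQ` is invariant by
reparametrization of weight `m + n + 1`. -/
theorem jetBracket_isInvariant {n : ℕ} (m q : ℕ) (P Q : MvPolynomial (Fin n × ℕ) ℂ)
    (hP : IsInvariantWt m P) (hQ : IsInvariantWt q Q) :
    IsInvariantWt (m + q + 1) (jetBracket m q P Q) := by
  intro f hf φ hφ z
  rw [jetEval_jetBracket, jetEval_jetBracket, hP.jetEval_comp_Dop hf hφ,
    hQ.jetEval_comp_Dop hf hφ, hP f hf φ hφ, hQ f hf φ hφ]
  set a := deriv φ z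
  -- the case split only handles the truncated exponents `m - 1` and `q - 1`
  have hcancel : (m : ℂ) * q * a ^ (m - 1) * a ^ q = m * q * a ^ m * a ^ (q - 1) := by
    rcases m with _ | m
    · simp
    rcases q with _ | q
    · simp
    simp only [Nat.add_sub_cancel, pow_succ]
    ring
  linear_combination (deriv (deriv φ) z * jetEval f (φ z) P * jetEval f (φ z) Q) * hcancel
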